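/- Let λ > −1/2, t > 0, and x, y > 0. Define the one-dimensional heat-Bessel kernel W_t^λ(x,y) = (2t)^{−1} exp(−(x²+y²)/(4t)) (xy)^{−λ+1/2} I_{λ−1/2}(xy/(2t)), where I_ν is the modified Bessel function of the first kind. Then W_t^λ(x,y) admits the representation W_t^λ(x,y) = (2λ+1)·2^{−1/2−λ}·t^{−1/2−λ} ∫_{[−1,1]} exp(−q(x,y,s)/(4t)) dΩ_{λ+1}(s) + 2^{−5/2−λ}·t^{−5/2−λ}·(xy)² ∫_{[−1,1]} exp(−q(x,y,s)/(4t)) dΩ_{λ+2}(s), where q(x,y,s) = x² + y² + 2xys and dΩ_ν(s) = (1−s²)^{ν−1} ds/(√π·2^{ν−1/2}·Γ(ν)). -/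

import Mathlib

open MeasureTheory Real

/-- The modified Bessel function of the first kind, defined via its power series
`I_ν(z) = z^ν Σ_m (z/2)^{2m} / (2^ν m! Γ(m+ν+1))` (for `z > 0`, `ν > −1`). -/
noncomputable def besselI (ν z : ℝ) : ℝ :=
  z ^ ν * ∑' m : ℕ, (z / 2) ^ (2 * m) /
    ((2 : ℝ) ^ ν * (Nat.factorial m) * Real.Gamma (m + ν + 1))

/-- The one-dimensional heat-Bessel kernel `W_t^λ(x,y)`. -/
noncomputable def heatBessel (l t x y : ℝ) : ℝ :=
  (2 * t)⁻¹ * Real.exp (-(x ^ 2 + y ^ 2) / (4 * t)) *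
    (x * y) ^ (-l + 1/2) * besselI (l - 1/2) (x * y / (2 * t))

/-- `q(x,y,s) = x² + y² + 2xys`. -/
def q1 (x y s : ℝ) : ℝ := x ^ 2 + y ^ 2 + 2 * x * y * s

/-- The density of the measure `Ω_ν` on `[-1,1]`. -/
noncomputable def omegaDens (ν s : ℝ) : ℝ :=
  (1 - s ^ 2) ^ (ν - 1) / (Real.sqrt π * (2 : ℝ) ^ (ν - 1/2) * Real.Gamma ν)

/-!
Put `z = xy/(2t)` and `S_c(w) = Σ_m w^m / (m! Γ(m + c))`, so that
`I_ν(z) = (z/2)^ν S_{ν+1}(z²/4)` and the kernel is a multiple of `S_{λ+1/2}(z²/4)`.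
On the other side `exp(-q(x,y,s)/(4t)) = exp(-(x²+y²)/(4t)) exp(-zs)`; as the weight
`(1 - s²)^(ν-1)` is even, only `cosh(zs)` contributes, and integrating its power series termwise
leaves the Beta integrals `∫₀¹ s^(2m) (1 - s²)^(ν-1) ds = B(m + 1/2, ν) / 2`. With
`Γ(m + 1/2) 4^m m! = √π (2m)!` this gives `∫ exp(-zs) dΩ_ν(s) = 2^(1/2-ν) S_{ν+1/2}(z²/4)`.
The theorem thus becomes the contiguous relation `S_c(w) = c S_{c+1}(w) + w S_{c+2}(w)` at
`c = λ + 1/2`, which holds termwise because `1 / Γ(m + c) = (m + c) / Γ(m + c + 1)`.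
-/

open Set Nat

section BetaIntegral

variable {a b : ℝ}

lemma ofReal_cpow_mul_one_sub_cpow {u : ℝ} (hu₀ : 0 ≤ u) (hu₁ : u ≤ 1) :
    (u : ℂ) ^ ((a : ℂ) - 1) * (1 - (u : ℂ)) ^ ((b : ℂ) - 1) =
      ((u ^ (a - 1) * (1 - u) ^ (b - 1) : ℝ) : ℂ) := by
  rw [Complex.ofReal_mul, Complex.ofReal_cpow hu₀, Complex.ofReal_cpow (by linarith)]
  push_cast
  ring

lemma integrableOn_rpow_mul_one_sub_rpow (ha : 0 < a) (hb : 0 < b) :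
    IntegrableOn (fun u : ℝ => u ^ (a - 1) * (1 - u) ^ (b - 1)) (Ioo 0 1) := by
  have h := Complex.betaIntegral_convergent (u := a) (v := b) (by simpa) (by simpa)
  rw [intervalIntegrable_iff_integrableOn_Ioc_of_le zero_le_one] at h
  have h_re : IntegrableOn (fun u : ℝ => RCLike.re ((u : ℂ) ^ ((a : ℂ) - 1) *
      (1 - (u : ℂ)) ^ ((b : ℂ) - 1))) (Ioc 0 1) := h.re
  refine (h_re.mono_set Ioo_subset_Ioc_self).congr_fun (fun u hu => ?_) measurableSet_Ioo
  simp [ofReal_cpow_mul_one_sub_cpow hu.1.le hu.2.le]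

lemma integral_rpow_mul_one_sub_rpow (ha : 0 < a) (hb : 0 < b) :
    ∫ u in Ioo (0 : ℝ) 1, u ^ (a - 1) * (1 - u) ^ (b - 1) =
      Gamma a * Gamma b / Gamma (a + b) := by
  have h := Complex.betaIntegral_eq_Gamma_mul_div a b (by simpa) (by simpa)
  rw [Complex.betaIntegral, intervalIntegral.integral_of_le zero_le_one,
    ← Complex.ofReal_add] at h
  simp only [Complex.Gamma_ofReal] at h
  rw [← integral_Ioc_eq_integral_Ioo, ← Complex.ofReal_inj, ← integral_complex_ofReal,
    Complex.ofReal_div, Complex.ofReal_mul, ← h]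
  refine setIntegral_congr_fun measurableSet_Ioc fun u hu => ?_
  exact (ofReal_cpow_mul_one_sub_cpow hu.1.le hu.2).symm

lemma image_sq_Ioo_zero_one : (fun x : ℝ => x ^ 2) '' Ioo 0 1 = Ioo 0 1 := by
  ext u
  constructor
  · rintro ⟨x, hx, rfl⟩
    exact ⟨pow_pos hx.1 2, by nlinarith [hx.1, hx.2]⟩
  · intro hu
    exact ⟨√u, ⟨sqrt_pos.2 hu.1, (sqrt_lt' one_pos).2 (by simpa using hu.2)⟩,
      sq_sqrt hu.1.le⟩

lemma injOn_sq_Ioo_zero_one : InjOn (fun x : ℝ => x ^ 2) (Ioo 0 1) := fun x hx y hy h => by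
  nlinarith [hx.1, hy.1]

lemma hasDerivWithinAt_sq (s : Set ℝ) (x : ℝ) :
    HasDerivWithinAt (fun x : ℝ => x ^ 2) (2 * x) s x := by
  simpa using (hasDerivAt_pow 2 x).hasDerivWithinAt

lemma abs_two_mul_smul_comp_sq_eqOn (g : ℝ → ℝ) :
    EqOn (fun x => |2 * x| • g (x ^ 2)) (fun x => 2 * x * g (x ^ 2)) (Ioo 0 1) :=
  fun x hx => by simp [abs_of_pos hx.1]

lemma integrableOn_comp_sq_iff (g : ℝ → ℝ) :
    IntegrableOn (fun x => 2 * x * g (x ^ 2)) (Ioo 0 1) ↔ IntegrableOn g (Ioo 0 1) := by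
  rw [← integrableOn_congr_fun (abs_two_mul_smul_comp_sq_eqOn g) measurableSet_Ioo,
    ← integrableOn_image_iff_integrableOn_abs_deriv_smul measurableSet_Ioo
      (fun x _ => hasDerivWithinAt_sq _ x) injOn_sq_Ioo_zero_one, image_sq_Ioo_zero_one]

lemma integral_comp_sq (g : ℝ → ℝ) :
    ∫ x in Ioo (0 : ℝ) 1, 2 * x * g (x ^ 2) = ∫ u in Ioo (0 : ℝ) 1, g u := by
  rw [← setIntegral_congr_fun measurableSet_Ioo (abs_two_mul_smul_comp_sq_eqOn g),
    ← integral_image_eq_integral_abs_deriv_smul measurableSet_Ioo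
      (fun x _ => hasDerivWithinAt_sq _ x) injOn_sq_Ioo_zero_one, image_sq_Ioo_zero_one]

lemma two_mul_mul_comp_sq_eqOn (a b : ℝ) :
    EqOn (fun x : ℝ => 2 * x * ((x ^ 2) ^ (a - 1) * (1 - x ^ 2) ^ (b - 1)))
      (fun x => 2 * (x ^ (2 * a - 1) * (1 - x ^ 2) ^ (b - 1))) (Ioo 0 1) := fun x hx => by
  have hsq : x * (x ^ 2) ^ (a - 1) = x ^ (2 * a - 1) := by
    rw [← rpow_natCast, ← rpow_mul hx.1.le,
      show 2 * a - 1 = (2 : ℕ) * (a - 1) + 1 by push_cast; ring, rpow_add_one hx.1.ne']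
    ring
  simp only [← hsq]
  ring

lemma integrableOn_rpow_mul_one_sub_sq_rpow (ha : 0 < a) (hb : 0 < b) :
    IntegrableOn (fun x : ℝ => x ^ (2 * a - 1) * (1 - x ^ 2) ^ (b - 1)) (Ioo 0 1) := by
  have h := (integrableOn_comp_sq_iff _).2 (integrableOn_rpow_mul_one_sub_rpow ha hb)
  rw [integrableOn_congr_fun (two_mul_mul_comp_sq_eqOn a b) measurableSet_Ioo] at h
  exact IntegrableOn.congr_fun (h.const_mul 2⁻¹) (fun x _ => by ring) measurableSet_Ioo

lemma integral_rpow_mul_one_sub_sq_rpow (ha : 0 < a) (hb : 0 < b) :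
    ∫ x in Ioo (0 : ℝ) 1, x ^ (2 * a - 1) * (1 - x ^ 2) ^ (b - 1) =
      Gamma a * Gamma b / (2 * Gamma (a + b)) := by
  have h := integral_comp_sq fun u => u ^ (a - 1) * (1 - u) ^ (b - 1)
  rw [setIntegral_congr_fun measurableSet_Ioo (two_mul_mul_comp_sq_eqOn a b), integral_const_mul,
    integral_rpow_mul_one_sub_rpow ha hb] at h
  rw [div_mul_eq_div_div_swap, ← h]
  ring

end BetaIntegral

lemma Gamma_nat_add_half_mul (n : ℕ) :
    Gamma (n + 1 / 2) * 4 ^ n * n ! = √π * (2 * n)! := by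
  induction n with
  | zero => simpa using Gamma_one_half_eq
  | succ n ih =>
    have h : Gamma ((n + 1 : ℕ) + 1 / 2) = (n + 1 / 2) * Gamma (n + 1 / 2) := by
      rw [show ((n + 1 : ℕ) : ℝ) + 1 / 2 = (n + 1 / 2) + 1 by push_cast; ring,
        Gamma_add_one (by positivity)]
    rw [h, show 2 * (n + 1) = 2 * n + 1 + 1 by ring]
    push_cast [Nat.factorial_succ]
    linear_combination (4 * ((n : ℝ) + 1 / 2) * (n + 1)) * ih

noncomputable def besselSeries (c w : ℝ) : ℝ :=
  ∑' m : ℕ, w ^ m / (m ! * Gamma (m + c))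

lemma summable_besselSeries (c w : ℝ) :
    Summable fun m : ℕ => w ^ m / (m ! * Gamma (m + c)) := by
  refine .of_norm_bounded_eventually_nat (Real.summable_pow_div_factorial |w|) ?_
  filter_upwards [Filter.eventually_ge_atTop ⌈2 - c⌉₊] with m hm
  have h₂ : (2 : ℝ) ≤ m + c := by linarith [Nat.ceil_le.1 hm]
  have hΓ : 1 ≤ Gamma (m + c) := by
    simpa [Gamma_two] using Gamma_strictMonoOn_Ici.monotoneOn (le_refl (2 : ℝ)) h₂ h₂
  rw [norm_div, norm_mul, norm_pow, Real.norm_natCast, Real.norm_of_nonneg (zero_le_one.trans hΓ),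
    Real.norm_eq_abs]
  exact div_le_div_of_nonneg_left (by positivity) (by positivity)
    (le_mul_of_one_le_right (by positivity) hΓ)

lemma inv_Gamma_eq_mul_inv_Gamma_add_one (s : ℝ) : (Gamma s)⁻¹ = s * (Gamma (s + 1))⁻¹ := by
  rcases eq_or_ne s 0 with rfl | hs
  · simp [Gamma_zero]
  · rw [Gamma_add_one hs, mul_inv, ← mul_assoc, mul_inv_cancel₀ hs, one_mul]

lemma besselSeries_eq_add (c w : ℝ) :
    besselSeries c w = c * besselSeries (c + 1) w + w * besselSeries (c + 2) w := by
  set g : ℕ → ℝ := fun m => m * (w ^ m / (m ! * Gamma (m + (c + 1)))) with hg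
  have hg_succ (n : ℕ) : g (n + 1) = w * (w ^ n / (n ! * Gamma (n + (c + 2)))) := by
    simp only [hg, Nat.factorial_succ]
    push_cast
    rw [show (n : ℝ) + 1 + (c + 1) = n + (c + 2) by ring]
    field_simp
    ring
  have hg_summable : Summable g :=
    (summable_nat_add_iff 1).1 <| by
      simpa only [hg_succ] using (summable_besselSeries _ w).mul_left w
  have hterm (m : ℕ) : w ^ m / (m ! * Gamma (m + c)) =
      c * (w ^ m / (m ! * Gamma (m + (c + 1)))) + g m := by
    rw [div_eq_mul_inv, mul_inv, inv_Gamma_eq_mul_inv_Gamma_add_one, hg, add_assoc]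
    ring
  rw [besselSeries, tsum_congr hterm, ((summable_besselSeries _ w).mul_left c).tsum_add hg_summable,
    tsum_mul_left, hg_summable.tsum_eq_zero_add]
  simp only [hg_succ, tsum_mul_left]
  simp [hg, besselSeries]

lemma besselI_eq_besselSeries (ν z : ℝ) :
    besselI ν z = z ^ ν / 2 ^ ν * besselSeries (ν + 1) (z ^ 2 / 4) := by
  rw [besselI, besselSeries, div_mul_eq_mul_div, mul_div_assoc, ← tsum_div_const]
  congr 1
  refine tsum_congr fun m => ?_
  rw [pow_mul, div_pow, ← add_assoc]
  ring

section Weight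

variable {ν : ℝ}

lemma rpow_two_mul_nat_add_half_sub_one (x : ℝ) (n : ℕ) :
    x ^ (2 * ((n : ℝ) + 1 / 2) - 1) = x ^ (2 * n) := by
  rw [← rpow_natCast]
  push_cast
  ring_nf

lemma integrableOn_pow_mul_one_sub_sq_rpow (hν : 0 < ν) (n : ℕ) :
    IntegrableOn (fun x : ℝ => x ^ (2 * n) * (1 - x ^ 2) ^ (ν - 1)) (Ioo 0 1) := by
  have h := integrableOn_rpow_mul_one_sub_sq_rpow (a := n + 1 / 2) (by positivity) hν
  simpa only [rpow_two_mul_nat_add_half_sub_one] using h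

lemma integral_pow_mul_one_sub_sq_rpow (hν : 0 < ν) (n : ℕ) :
    ∫ x in Ioo (0 : ℝ) 1, x ^ (2 * n) * (1 - x ^ 2) ^ (ν - 1) =
      Gamma (n + 1 / 2) * Gamma ν / (2 * Gamma (n + 1 / 2 + ν)) := by
  have h := integral_rpow_mul_one_sub_sq_rpow (a := n + 1 / 2) (by positivity) hν
  simpa only [rpow_two_mul_nat_add_half_sub_one] using h

lemma integral_symmetric_eq_integral_add_comp_neg {f : ℝ → ℝ} {a : ℝ}
    (hf : IntervalIntegrable f volume 0 a)
    (hf_neg : IntervalIntegrable (fun x => f (-x)) volume 0 a) :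
    ∫ x in -a..a, f x = ∫ x in 0..a, (f x + f (-x)) := by
  have hf_left : IntervalIntegrable f volume (-a) 0 := by
    simpa using ((IntervalIntegrable.iff_comp_neg).1 hf_neg).symm
  rw [← intervalIntegral.integral_add_adjacent_intervals hf_left hf,
    intervalIntegral.integral_add hf hf_neg, intervalIntegral.integral_comp_neg, neg_zero, add_comm]

lemma intervalIntegrable_exp_mul_one_sub_sq_rpow (hν : 0 < ν) (z : ℝ) :
    IntervalIntegrable (fun x => exp (z * x) * (1 - x ^ 2) ^ (ν - 1)) volume 0 1 := by
  rw [intervalIntegrable_iff_integrableOn_Icc_of_le zero_le_one]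
  have hw : IntegrableOn (fun x : ℝ => (1 - x ^ 2) ^ (ν - 1)) (Icc 0 1) :=
    (integrableOn_Icc_iff_integrableOn_Ioo).2
      (by simpa using integrableOn_pow_mul_one_sub_sq_rpow hν 0)
  exact hw.continuousOn_mul (by fun_prop) isCompact_Icc

lemma integral_exp_mul_one_sub_sq_rpow_eq_cosh (hν : 0 < ν) (z : ℝ) :
    ∫ s in Icc (-1 : ℝ) 1, exp (z * s) * (1 - s ^ 2) ^ (ν - 1) =
      2 * ∫ x in Ioo (0 : ℝ) 1, cosh (z * x) * (1 - x ^ 2) ^ (ν - 1) := by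
  have hneg := intervalIntegrable_exp_mul_one_sub_sq_rpow hν (-z)
  rw [integral_Icc_eq_integral_Ioc, ← intervalIntegral.integral_of_le (by norm_num),
    integral_symmetric_eq_integral_add_comp_neg (intervalIntegrable_exp_mul_one_sub_sq_rpow hν z)
      (by simpa using hneg),
    intervalIntegral.integral_of_le zero_le_one, integral_Ioc_eq_integral_Ioo,
    ← integral_const_mul]
  refine setIntegral_congr_fun measurableSet_Ioo fun x _ => ?_
  simp only [cosh_eq, mul_neg, neg_sq]
  ring

lemma integral_cosh_mul_one_sub_sq_rpow (hν : 0 < ν) (z : ℝ) :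
    ∫ x in Ioo (0 : ℝ) 1, cosh (z * x) * (1 - x ^ 2) ^ (ν - 1) =
      √π * Gamma ν / 2 * besselSeries (ν + 1 / 2) (z ^ 2 / 4) := by
  set F : ℕ → ℝ → ℝ :=
    fun n x => (z ^ 2) ^ n / (2 * n)! * (x ^ (2 * n) * (1 - x ^ 2) ^ (ν - 1)) with hF
  have hF_int (n : ℕ) : IntegrableOn (F n) (Ioo 0 1) :=
    (integrableOn_pow_mul_one_sub_sq_rpow hν n).const_mul _
  have hF_integral (n : ℕ) : ∫ x in Ioo (0 : ℝ) 1, F n x =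
      √π * Gamma ν / 2 * ((z ^ 2 / 4) ^ n / (n ! * Gamma (n + (ν + 1 / 2)))) := by
    have hΓ : Gamma (n + 1 / 2) = √π * (2 * n)! / (4 ^ n * n !) := by
      rw [← Gamma_nat_add_half_mul]
      field_simp
    rw [integral_const_mul, integral_pow_mul_one_sub_sq_rpow hν n, div_pow, hΓ,
      show (n : ℝ) + (ν + 1 / 2) = n + 1 / 2 + ν by ring]
    generalize Gamma (n + 1 / 2 + ν) = G
    field_simp
  have hF_norm (n : ℕ) :
      ∫ x in Ioo (0 : ℝ) 1, ‖F n x‖ = ∫ x in Ioo (0 : ℝ) 1, F n x := by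
    refine setIntegral_congr_fun measurableSet_Ioo fun x hx => Real.norm_of_nonneg ?_
    have : 0 ≤ 1 - x ^ 2 := by nlinarith [hx.1, hx.2]
    exact mul_nonneg (by positivity) (mul_nonneg (pow_nonneg hx.1.le _) (rpow_nonneg this _))
  have hF_sum : Summable fun n => ∫ x in Ioo (0 : ℝ) 1, ‖F n x‖ := by
    simpa only [hF_norm, hF_integral] using (summable_besselSeries _ _).mul_left _
  have hcosh (x : ℝ) : cosh (z * x) * (1 - x ^ 2) ^ (ν - 1) = ∑' n, F n x := by
    rw [cosh_eq_tsum, ← tsum_mul_right]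
    refine tsum_congr fun n => ?_
    rw [hF, mul_pow, pow_mul, pow_mul]
    ring
  simp_rw [hcosh]
  rw [← integral_tsum_of_summable_integral_norm hF_int hF_sum]
  simp only [hF_integral, tsum_mul_left, besselSeries]

lemma integral_exp_mul_omegaDens (hν : 0 < ν) (z : ℝ) :
    ∫ s in Icc (-1 : ℝ) 1, exp (z * s) * omegaDens ν s =
      besselSeries (ν + 1 / 2) (z ^ 2 / 4) / 2 ^ (ν - 1 / 2) := by
  simp only [omegaDens, mul_div_assoc']
  rw [integral_div, integral_exp_mul_one_sub_sq_rpow_eq_cosh hν,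
    integral_cosh_mul_one_sub_sq_rpow hν]
  have := Gamma_pos_of_pos hν
  field_simp

lemma integral_exp_neg_q1_mul_omegaDens {t : ℝ} (hν : 0 < ν) (ht : t ≠ 0) (x y : ℝ) :
    ∫ s in Icc (-1 : ℝ) 1, exp (-q1 x y s / (4 * t)) * omegaDens ν s =
      exp (-(x ^ 2 + y ^ 2) / (4 * t)) *
        (besselSeries (ν + 1 / 2) ((x * y / (2 * t)) ^ 2 / 4) / 2 ^ (ν - 1 / 2)) := by
  have hq (s : ℝ) : exp (-q1 x y s / (4 * t)) =
      exp (-(x ^ 2 + y ^ 2) / (4 * t)) * exp (-(x * y / (2 * t)) * s) := by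
    rw [← exp_add, q1]
    congr 1
    field_simp
    ring
  simp_rw [hq, mul_assoc]
  rw [integral_const_mul, integral_exp_mul_omegaDens hν, neg_sq]

end Weight

lemma heatBessel_eq_besselSeries {l t x y : ℝ} (ht : 0 < t) (hxy : 0 < x * y) :
    heatBessel l t x y =
      exp (-(x ^ 2 + y ^ 2) / (4 * t)) * besselSeries (l + 1 / 2) ((x * y / (2 * t)) ^ 2 / 4) /
        ((2 * t) ^ (l + 1 / 2) * 2 ^ (l - 1 / 2)) := by
  have hxy_pow : (x * y) ^ (-l + 1 / 2) * (x * y) ^ (l - 1 / 2) = 1 := by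
    rw [← rpow_add hxy, show -l + 1 / 2 + (l - 1 / 2) = 0 by ring, rpow_zero]
  have h2t_pow : (2 * t) ^ (l + 1 / 2) = (2 * t) ^ (l - 1 / 2) * (2 * t) := by
    rw [← rpow_add_one (by positivity)]
    ring_nf
  rw [heatBessel, besselI_eq_besselSeries, div_rpow hxy.le (by positivity), h2t_pow,
    show l - 1 / 2 + 1 = l + 1 / 2 by ring]
  linear_combination exp (-(x ^ 2 + y ^ 2) / (4 * t)) *
    besselSeries (l + 1 / 2) ((x * y / (2 * t)) ^ 2 / 4) /
      ((2 * t) ^ (l - 1 / 2) * (2 * t) * 2 ^ (l - 1 / 2)) * hxy_pow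

theorem stmt19 (l t x y : ℝ) (hl : -1/2 < l) (ht : 0 < t) (hx : 0 < x) (hy : 0 < y) :
    heatBessel l t x y =
      (2 * l + 1) * (2 : ℝ) ^ (-1/2 - l : ℝ) * t ^ (-1/2 - l : ℝ) *
        (∫ s in Set.Icc (-1 : ℝ) 1,
          Real.exp (-q1 x y s / (4 * t)) * omegaDens (l + 1) s) +
      (2 : ℝ) ^ (-5/2 - l : ℝ) * t ^ (-5/2 - l : ℝ) * (x * y) ^ 2 *
        (∫ s in Set.Icc (-1 : ℝ) 1,
          Real.exp (-q1 x y s / (4 * t)) * omegaDens (l + 2) s) := by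
  rw [heatBessel_eq_besselSeries ht (mul_pos hx hy), besselSeries_eq_add,
    integral_exp_neg_q1_mul_omegaDens (by linarith) ht.ne',
    integral_exp_neg_q1_mul_omegaDens (by linarith) ht.ne',
    show l + 1 / 2 + 1 = l + 1 + 1 / 2 by ring, show l + 1 / 2 + 2 = l + 2 + 1 / 2 by ring]
  set U := (2 : ℝ) ^ (l + 1 / 2) with hU
  set T := t ^ (l + 1 / 2) with hT
  have h2t : (2 * t) ^ (l + 1 / 2) = U * T := mul_rpow zero_le_two ht.le
  have h₁ : (2 : ℝ) ^ (l - 1 / 2) = U / 2 := by rw [hU, ← rpow_sub_one two_ne_zero]; ring_nf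
  have h₂ : (2 : ℝ) ^ (-1 / 2 - l) = U⁻¹ := by rw [hU, ← rpow_neg zero_le_two]; ring_nf
  have h₃ : t ^ (-1 / 2 - l) = T⁻¹ := by rw [hT, ← rpow_neg ht.le]; ring_nf
  have h₄ : (2 : ℝ) ^ (l + 1 - 1 / 2) = U := by rw [hU]; ring_nf
  have h₅ : (2 : ℝ) ^ (-5 / 2 - l) = U⁻¹ / 2 ^ 2 := by
    rw [hU, ← rpow_neg zero_le_two, ← rpow_sub_natCast two_ne_zero]; ring_nf
  have h₆ : t ^ (-5 / 2 - l) = T⁻¹ / t ^ 2 := by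
    rw [hT, ← rpow_neg ht.le, ← rpow_sub_natCast ht.ne']; ring_nf
  have h₇ : (2 : ℝ) ^ (l + 2 - 1 / 2) = 2 * U := by
    rw [hU, mul_comm, ← rpow_add_one two_ne_zero]; ring_nf
  rw [h2t, h₁, h₂, h₃, h₄, h₅, h₆, h₇]
  field_simp
  ring
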